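/- Let u, v ∈ ℝ^d and k ≥ 1 an integer, and let T_u^{(k)}, T_v^{(k)} ∈ ℝ^m be the degree-k TensorSketches of u and v built from the same random hash functions h_1,…,h_k and sign functions s_1,…,s_k. Then E[ ⟨T_u^{(k)}, T_v^{(k)}⟩ ] = ⟨u, v⟩^k. -/
import Mathlib


open scoped BigOperators

noncomputable section

/-- The real value of a Boolean sign. -/
def sgn (b : Bool) : ℝ := if b then 1 else -1

/-- Degree-`k` TensorSketch of `u ∈ ℝ^d` built from hash functions
`h 0, …, h (k-1) : [d] → {0,…,m-1}` and sign functions `s 0, …, s (k-1)`. -/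
def tSketch {d m : ℕ} [NeZero m] (k : ℕ) (h : Fin k → Fin d → Fin m)
    (s : Fin k → Fin d → Bool) (u : Fin d → ℝ) : Fin m → ℝ :=
  fun j => ∑ i : Fin k → Fin d,
    if (∑ t, h t (i t)) = j then ∏ t, (sgn (s t (i t)) * u (i t)) else 0

/-- Expectation over the hash functions `h t` and the sign functions `s t`,
drawn independently and uniformly at random. -/
def expHS {k d m : ℕ}
    (F : (Fin k → Fin d → Fin m) → (Fin k → Fin d → Bool) → ℝ) : ℝ :=
  (∑ h : Fin k → Fin d → Fin m, ∑ s : Fin k → Fin d → Bool, F h s) /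
    ((Fintype.card (Fin k → Fin d → Fin m)) * (Fintype.card (Fin k → Fin d → Bool)))


lemma sgn_sq (b : Bool) : sgn b * sgn b = 1 := by cases b <;> simp [sgn]
lemma sgn_not (b : Bool) : sgn (!b) = - sgn b := by cases b <;> simp [sgn]

lemma sumS {d : ℕ} (a b : Fin d) :
    ∑ f : Fin d → Bool, sgn (f a) * sgn (f b)
      = if a = b then (Fintype.card (Fin d → Bool) : ℝ) else 0 := by
  rcases eq_or_ne a b with rfl | hab
  · simp [sgn_sq]
  · simp only [hab, if_neg, if_false]
    have key : ∑ f : Fin d → Bool, sgn (f a) * sgn (f b)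
        = ∑ f : Fin d → Bool, sgn ((Function.update f a (!(f a))) a)
            * sgn ((Function.update f a (!(f a))) b) := by
      apply Fintype.sum_bijective (fun f : Fin d → Bool => Function.update f a (!(f a)))
      · have hinv : Function.Involutive
            (fun f : Fin d → Bool => Function.update f a (!(f a))) := by
          intro f
          funext x
          rcases eq_or_ne x a with rfl | hx
          · simp
          · simp [Function.update_of_ne hx]
        exact hinv.bijective
      · intro f
        simp [Function.update_of_ne (Ne.symm hab)]
    have : ∑ f : Fin d → Bool, sgn (f a) * sgn (f b)
        = - ∑ f : Fin d → Bool, sgn (f a) * sgn (f b) := by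
      nth_rewrite 1 [key]
      rw [← Finset.sum_neg_distrib]
      apply Finset.sum_congr rfl
      intro f _
      rw [Function.update_self, Function.update_of_ne (Ne.symm hab), sgn_not]
      ring
    linarith

lemma sumSfull {k d : ℕ} (i i' : Fin k → Fin d) :
    ∑ s : Fin k → Fin d → Bool, ∏ t, (sgn (s t (i t)) * sgn (s t (i' t)))
      = if i = i' then (Fintype.card (Fin k → Fin d → Bool) : ℝ) else 0 := by
  rw [← Fintype.prod_sum (f := fun t (f : Fin d → Bool) => sgn (f (i t)) * sgn (f (i' t)))]
  simp only [sumS]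
  rcases eq_or_ne i i' with rfl | hne
  · simp [Finset.prod_const, Fintype.card_fun]
  · rw [if_neg hne]
    obtain ⟨t, ht⟩ := Function.ne_iff.mp hne
    exact Finset.prod_eq_zero (Finset.mem_univ t) (by simp [ht])

lemma innerSum {m : ℕ} (p q : Fin m) (a b : ℝ) :
    ∑ j, (if p = j then a else 0) * (if q = j then b else 0)
      = if p = q then a * b else 0 := by
  have : ∀ j : Fin m, (if p = j then a else 0) * (if q = j then b else 0)
      = if p = j then (a * if q = j then b else 0) else 0 := by
    intro j; split_ifs <;> simp
  simp only [this, Finset.sum_ite_eq, Finset.mem_univ, if_true]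
  rcases eq_or_ne p q with rfl | h
  · simp
  · simp [h, (Ne.symm h)]

/-- **TensorSketch preserves powers of dot products in expectation**:
`E[⟨T_u^{(k)}, T_v^{(k)}⟩] = ⟨u, v⟩^k` when both sketches use the same `h t, s t`. -/
theorem tensorSketch_dotProduct_unbiased {d m : ℕ} [NeZero m] (k : ℕ) (hk : 1 ≤ k)
    (u v : Fin d → ℝ) :
    expHS (fun (h : Fin k → Fin d → Fin m) (s : Fin k → Fin d → Bool) =>
      ∑ j, tSketch k h s u j * tSketch k h s v j)
    = (∑ i, u i * v i) ^ k := by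
  classical
  have key : ∀ (h : Fin k → Fin d → Fin m) (s : Fin k → Fin d → Bool),
      ∑ j, tSketch k h s u j * tSketch k h s v j =
      ∑ i : Fin k → Fin d, ∑ i' : Fin k → Fin d,
        (if (∑ t, h t (i t)) = (∑ t, h t (i' t)) then (1 : ℝ) else 0) *
          ((∏ t, (sgn (s t (i t)) * sgn (s t (i' t)))) *
            ((∏ t, u (i t)) * (∏ t, v (i' t)))) := by
    intro h s
    simp only [tSketch, Finset.sum_mul_sum]
    rw [Finset.sum_comm]
    refine Finset.sum_congr rfl fun i _ => ?_
    rw [Finset.sum_comm]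
    refine Finset.sum_congr rfl fun i' _ => ?_
    rw [innerSum]
    split_ifs with hpq
    · rw [one_mul, ← Finset.prod_mul_distrib, ← Finset.prod_mul_distrib,
        ← Finset.prod_mul_distrib]
      exact Finset.prod_congr rfl fun t _ => by ring
    · rw [zero_mul]
  have num : (∑ h : Fin k → Fin d → Fin m, ∑ s : Fin k → Fin d → Bool,
      ∑ j, tSketch k h s u j * tSketch k h s v j)
      = (Fintype.card (Fin k → Fin d → Fin m) : ℝ) *
        ((Fintype.card (Fin k → Fin d → Bool) : ℝ) * (∑ i, u i * v i) ^ k) := by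
    calc
      (∑ h : Fin k → Fin d → Fin m, ∑ s : Fin k → Fin d → Bool,
          ∑ j, tSketch k h s u j * tSketch k h s v j)
        = ∑ h : Fin k → Fin d → Fin m, ∑ s : Fin k → Fin d → Bool,
            ∑ i : Fin k → Fin d, ∑ i' : Fin k → Fin d,
              (if (∑ t, h t (i t)) = (∑ t, h t (i' t)) then (1 : ℝ) else 0) *
                ((∏ t, (sgn (s t (i t)) * sgn (s t (i' t)))) *
                  ((∏ t, u (i t)) * (∏ t, v (i' t)))) := by
          exact Finset.sum_congr rfl fun h _ => Finset.sum_congr rfl fun s _ => key h s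
      _ = ∑ h : Fin k → Fin d → Fin m, ∑ i : Fin k → Fin d, ∑ i' : Fin k → Fin d,
            (if (∑ t, h t (i t)) = (∑ t, h t (i' t)) then (1 : ℝ) else 0) *
              ((∑ s : Fin k → Fin d → Bool, ∏ t, (sgn (s t (i t)) * sgn (s t (i' t)))) *
                ((∏ t, u (i t)) * (∏ t, v (i' t)))) := by
          refine Finset.sum_congr rfl fun h _ => ?_
          rw [Finset.sum_comm]
          refine Finset.sum_congr rfl fun i _ => ?_
          rw [Finset.sum_comm]
          refine Finset.sum_congr rfl fun i' _ => ?_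
          rw [← Finset.mul_sum]
          congr 1
          rw [← Finset.sum_mul]
      _ = ∑ h : Fin k → Fin d → Fin m, ∑ i : Fin k → Fin d,
            (Fintype.card (Fin k → Fin d → Bool) : ℝ) *
              ∏ t, (u (i t) * v (i t)) := by
          refine Finset.sum_congr rfl fun h _ => Finset.sum_congr rfl fun i _ => ?_
          rw [Finset.sum_eq_single i]
          · rw [if_pos rfl, one_mul, sumSfull, if_pos rfl, Finset.prod_mul_distrib]
          · intro i' _ hne
            rw [sumSfull, if_neg (Ne.symm hne), zero_mul, mul_zero]
          · simp
      _ = (Fintype.card (Fin k → Fin d → Fin m) : ℝ) *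
            ((Fintype.card (Fin k → Fin d → Bool) : ℝ) * (∑ i, u i * v i) ^ k) := by
          rw [Finset.sum_const, Finset.card_univ, ← Finset.mul_sum, nsmul_eq_mul,
            Fintype.sum_pow (f := fun a => u a * v a)]
  have hH : (Fintype.card (Fin k → Fin d → Fin m) : ℝ) ≠ 0 := by
    exact_mod_cast Fintype.card_ne_zero
  have hS : (Fintype.card (Fin k → Fin d → Bool) : ℝ) ≠ 0 := by
    exact_mod_cast Fintype.card_ne_zero
  rw [expHS, num, ← mul_assoc, mul_comm
    ((Fintype.card (Fin k → Fin d → Fin m) : ℝ) * (Fintype.card (Fin k → Fin d → Bool) : ℝ)),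
    mul_div_assoc, div_self (mul_ne_zero hH hS), mul_one]
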